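/- arXiv:2005.03726 — 4 statements merged into one kernel-verified Lean document; each statement's English description precedes it below -/
import Mathlib

section
/- Let A be an n×n real matrix, B an n×m real matrix, W ⊆ ℝⁿ a set of disturbances, κ : ℝⁿ → ℝᵐ a feedback controller, and X_I ⊆ ℝⁿ a robust control invariant set under κ (i.e., for every x ∈ X_I and every w ∈ W, A x + B κ(x) + w ∈ X_I). Define the strengthened safe set X' = B(X_I,0) ∩ X_I, where B(X_I,0) = {x ∈ ℝⁿ | ∀ w ∈ W, A x + w ∈ X_I}. Consider any trajectory x : ℕ → ℝⁿ, u : ℕ → ℝᵐ, w : ℕ → ℝⁿ satisfying x(t+1) = A x(t) + B u(t) + w(t) and w(t) ∈ W for all t, where at every step t the input satisfies either u(t) = κ(x(t)), or u(t) = 0 and x(t) ∈ X' (any skipping decision function may choose between these when x(t) ∈ X'). If x(0) ∈ X_I, then x(t) ∈ X_I for all t ∈ ℕ; in particular, if X_I ⊆ X for a safe set X ⊆ ℝⁿ, then x(t) ∈ X for all t. -/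
/-- Theorem 1 (safety of the opportunistic intermittent-control framework):
if `X_I` is a robust control invariant set under `κ` and the strengthened
safe set is `X' = B(X_I,0) ∩ X_I`, then any trajectory that at each step
either applies `κ` or (when the state is in `X'`) applies zero input,
starting in `X_I`, stays in `X_I` forever; in particular it stays in any
safe set `X ⊇ X_I`. -/
theorem intermittent_control_safety
    {n m : ℕ}
    (A : Matrix (Fin n) (Fin n) ℝ) (B : Matrix (Fin n) (Fin m) ℝ)
    (W : Set (Fin n → ℝ)) (κ : (Fin n → ℝ) → (Fin m → ℝ))
    (XI : Set (Fin n → ℝ))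
    (hinv : ∀ x ∈ XI, ∀ w ∈ W, A.mulVec x + B.mulVec (κ x) + w ∈ XI)
    (X' : Set (Fin n → ℝ))
    (hX' : X' = {x | ∀ w ∈ W, A.mulVec x + w ∈ XI} ∩ XI)
    (x : ℕ → (Fin n → ℝ)) (u : ℕ → (Fin m → ℝ)) (w : ℕ → (Fin n → ℝ))
    (hdyn : ∀ t, x (t + 1) = A.mulVec (x t) + B.mulVec (u t) + w t)
    (hw : ∀ t, w t ∈ W)
    (hu : ∀ t, u t = κ (x t) ∨ (u t = 0 ∧ x t ∈ X'))
    (h0 : x 0 ∈ XI)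
    (X : Set (Fin n → ℝ)) (hXIX : XI ⊆ X) :
    (∀ t, x t ∈ XI) ∧ (∀ t, x t ∈ X) := by
  have hXI : ∀ t, x t ∈ XI := by
    intro t
    induction t with
    | zero => exact h0
    | succ t ih =>
      rw [hdyn t]
      rcases hu t with h | ⟨h0u, hx'⟩
      · rw [h]; exact hinv _ ih _ (hw t)
      · rw [hX'] at hx'
        have := hx'.1 (w t) (hw t)
        simpa [h0u, Matrix.mulVec_zero] using this
  exact ⟨hXI, fun t => hXIX (hXI t)⟩
end

section
/- Let A be an n×n real matrix, B an n×m real matrix, U ⊆ ℝᵐ, W ⊆ ℝⁿ, X ⊆ ℝⁿ, and let N ≥ 1 be the prediction horizon. Define the tightened constraint sets X(0) = X and, for k ≥ 1, X(k) = {x ∈ X(k−1) | ∀ w ∈ W, x + A^{k−1} w ∈ X(k−1)}. Call a control sequence u_0, …, u_{N−1} feasible for x₀ ∈ ℝⁿ if u_k ∈ U for all k, the nominal states defined by x_0 = x₀ and x_{k+1} = A x_k + B u_k satisfy x_k ∈ X(k) for all 0 ≤ k ≤ N, and x_N ∈ X_T, where X_T ⊆ ℝⁿ is the terminal set; let X_F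 be the set of states admitting a feasible control sequence. Assume X_T ⊆ X(N) and that there exists a robust local controller κ_L : ℝⁿ → ℝᵐ such that for every x ∈ X_T and every w ∈ W, the point y = x + A^{N−1} w satisfies κ_L(y) ∈ U and A y + B κ_L(y) ∈ X_T. Then for every x₀ ∈ X_F, every feasible control sequence u_0, …, u_{N−1} for x₀, and every w ∈ W, the successor state A x₀ + B u_0 + w belongs to X_F. Consequently, X_F is a robust control invariant set under any controller κ that, for each x ∈ X_F, returns the first element u_0 of some feasible control sequence for x (in particular, under the robust model predictive controller). -/
/-- A control sequence `u` is feasible for initial state `x₀` in the RMPC with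
horizon `N`: inputs lie in `U`, the nominal states `x_{k+1} = A x_k + B u_k`
satisfy the tightened constraints `Xk k` for `0 ≤ k ≤ N`, and the terminal
nominal state lies in the terminal set `XT`. -/
def RMPCFeasible {n m : ℕ}
    (A : Matrix (Fin n) (Fin n) ℝ) (B : Matrix (Fin n) (Fin m) ℝ)
    (U : Set (Fin m → ℝ)) (Xk : ℕ → Set (Fin n → ℝ)) (XT : Set (Fin n → ℝ))
    (N : ℕ) (x₀ : Fin n → ℝ) (u : ℕ → (Fin m → ℝ)) : Prop :=
  (∀ k < N, u k ∈ U) ∧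
  ∃ xs : ℕ → (Fin n → ℝ), xs 0 = x₀ ∧
    (∀ k < N, xs (k + 1) = A.mulVec (xs k) + B.mulVec (u k)) ∧
    (∀ k ≤ N, xs k ∈ Xk k) ∧ xs N ∈ XT

/-- Proposition 1: under a terminal set `XT ⊆ X(N)` admitting a robust local
controller, the RMPC feasible set `X_F` is robust control invariant: any
disturbed successor from a feasible state under the first element of a
feasible control sequence stays in `X_F`; consequently `X_F` is robust
control invariant under any controller returning such first elements. -/
theorem rmpc_feasible_set_robust_invariant
    {n m : ℕ}
    (A : Matrix (Fin n) (Fin n) ℝ) (B : Matrix (Fin n) (Fin m) ℝ)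
    (U : Set (Fin m → ℝ)) (W : Set (Fin n → ℝ)) (X : Set (Fin n → ℝ))
    (N : ℕ) (hN : 1 ≤ N)
    (Xk : ℕ → Set (Fin n → ℝ))
    (hXk0 : Xk 0 = X)
    (hXk : ∀ k, Xk (k + 1) = {x ∈ Xk k | ∀ w ∈ W, x + (A ^ k).mulVec w ∈ Xk k})
    (XT : Set (Fin n → ℝ)) (hXT : XT ⊆ Xk N)
    (κL : (Fin n → ℝ) → (Fin m → ℝ))
    (hκL : ∀ x ∈ XT, ∀ w ∈ W,
      κL (x + (A ^ (N - 1)).mulVec w) ∈ U ∧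
      A.mulVec (x + (A ^ (N - 1)).mulVec w) +
        B.mulVec (κL (x + (A ^ (N - 1)).mulVec w)) ∈ XT)
    (XF : Set (Fin n → ℝ))
    (hXF : XF = {x₀ | ∃ u, RMPCFeasible A B U Xk XT N x₀ u}) :
    (∀ x₀ ∈ XF, ∀ u, RMPCFeasible A B U Xk XT N x₀ u → ∀ w ∈ W,
        A.mulVec x₀ + B.mulVec (u 0) + w ∈ XF) ∧
    (∀ κ : (Fin n → ℝ) → (Fin m → ℝ),
      (∀ x ∈ XF, ∃ u, RMPCFeasible A B U Xk XT N x u ∧ κ x = u 0) →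
      ∀ x ∈ XF, ∀ w ∈ W, A.mulVec x + B.mulVec (κ x) + w ∈ XF) := by

  have main : ∀ x₀ ∈ XF, ∀ u, RMPCFeasible A B U Xk XT N x₀ u → ∀ w ∈ W,
      A.mulVec x₀ + B.mulVec (u 0) + w ∈ XF := by
    intro x₀ _ u hfeas w hw
    obtain ⟨hu, xs, hxs0, hrec, hmem, hterm⟩ := hfeas
    obtain ⟨hκU, hκX⟩ := hκL (xs N) hterm w hw
    rw [hXF]
    refine ⟨fun k => if k < N - 1 then u (k + 1) else κL (xs N + (A ^ (N - 1)).mulVec w),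
      ?_,
      fun k => if k < N then xs (k + 1) + (A ^ k).mulVec w
        else A.mulVec (xs N + (A ^ (N - 1)).mulVec w) +
          B.mulVec (κL (xs N + (A ^ (N - 1)).mulVec w)),
      ?_, ?_, ?_, ?_⟩
    · intro k hk
      by_cases h : k < N - 1
      · simpa [h] using hu (k + 1) (by omega)
      · simpa [h] using hκU
    · simp only [if_pos (show 0 < N by omega)]
      rw [hrec 0 (by omega), hxs0, pow_zero, Matrix.one_mulVec]
    · intro k hk
      by_cases h : k + 1 < N
      · simp only [if_pos h, if_pos (show k < N by omega), if_pos (show k < N - 1 by omega)]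
        rw [hrec (k + 1) h, Matrix.mulVec_add, Matrix.mulVec_mulVec, ← pow_succ']
        abel
      · have hkN : k = N - 1 := by omega
        subst hkN
        have h1 : N - 1 + 1 = N := by omega
        simp only [h1, if_neg (lt_irrefl N), if_pos (show N - 1 < N by omega),
          if_neg (lt_irrefl (N - 1))]
    · intro k hk
      rcases eq_or_lt_of_le hk with rfl | h
      · simp only [if_neg (lt_irrefl k)]
        exact hXT hκX
      · simp only [if_pos h]
        have h2 := hmem (k + 1) (by omega)
        rw [hXk k] at h2
        exact h2.2 w hw
    · simp only [if_neg (lt_irrefl N)]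
      exact hκX
  refine ⟨main, fun κ hκ x hx w hw => ?_⟩
  obtain ⟨u, hu, hκx⟩ := hκ x hx
  rw [hκx]
  exact main x hx u hu w hw
end

section
/- Let A_K be an n×n real matrix (the closed-loop matrix A + BK of a linear feedback controller κ(x) = Kx), let W ⊆ ℝⁿ be a convex set of disturbances, let s ≥ 1 be an integer and α ∈ [0,1) a real number such that A_K^s w ∈ α • W for every w ∈ W (i.e., A_K^s W ⊆ α W). Define F = (1−α)⁻¹ • (W ⊕ A_K W ⊕ A_K² W ⊕ ⋯ ⊕ A_K^{s−1} W), i.e., F = {(1−α)⁻¹ · (w_0 + A_K w_1 + ⋯ + A_K^{s−1} w_{s−1}) | w_0, …, w_{s−1} ∈ W}, where ⊕ denotes Minkowski sum. Then F is robust positively invariant for the closed-loop disturbed system: for every x ∈ F and every w ∈ W, A_K x + w ∈ F. -/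
open Pointwise

/-- Invariant-set construction for linear feedback (Raković et al.): if `W` is
convex and `A_K^s W ⊆ α W` with `α ∈ [0,1)`, then
`F = (1−α)⁻¹ • (W ⊕ A_K W ⊕ ⋯ ⊕ A_K^{s−1} W)` is robust positively invariant
for the closed-loop system `x⁺ = A_K x + w`, `w ∈ W`. -/
theorem minkowski_sum_robust_invariant
    {n : ℕ}
    (AK : Matrix (Fin n) (Fin n) ℝ)
    (W : Set (Fin n → ℝ)) (hW : Convex ℝ W)
    (s : ℕ) (hs : 1 ≤ s)
    (α : ℝ) (hα0 : 0 ≤ α) (hα1 : α < 1)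
    (hAW : ∀ w ∈ W, (AK ^ s).mulVec w ∈ α • W)
    (F : Set (Fin n → ℝ))
    (hF : F = {y | ∃ w : Fin s → (Fin n → ℝ), (∀ i, w i ∈ W) ∧
      y = (1 - α)⁻¹ • ∑ i : Fin s, (AK ^ (i : ℕ)).mulVec (w i)}) :
    ∀ x ∈ F, ∀ w ∈ W, AK.mulVec x + w ∈ F := by
  subst hF
  obtain ⟨m, rfl⟩ : ∃ m, s = m + 1 := ⟨s - 1, (Nat.succ_pred_eq_of_pos hs).symm⟩
  rintro x ⟨wv, hwv, rfl⟩ w hw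
  obtain ⟨w', hw', hw'eq⟩ := hAW (wv (Fin.last m)) (hwv (Fin.last m))
  have h1α : (0:ℝ) < 1 - α := by linarith
  refine ⟨Fin.cases (α • w' + (1 - α) • w) (fun j => wv j.castSucc), ?_, ?_⟩
  · intro i
    refine Fin.cases ?_ (fun j => ?_) i
    · exact hW hw' hw hα0 (le_of_lt h1α) (by ring)
    · exact hwv j.castSucc
  · have hmul : AK.mulVec ((1 - α)⁻¹ • ∑ i : Fin (m + 1), (AK ^ (i : ℕ)).mulVec (wv i))
        = (1 - α)⁻¹ • ∑ i : Fin (m + 1), (AK ^ ((i : ℕ) + 1)).mulVec (wv i) := by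
      rw [Matrix.mulVec_smul]
      congr 1
      rw [show AK.mulVec (∑ i : Fin (m + 1), (AK ^ (i : ℕ)).mulVec (wv i))
            = ∑ i : Fin (m + 1), AK.mulVec ((AK ^ (i : ℕ)).mulVec (wv i)) from
          map_sum AK.mulVecLin _ _]
      refine Finset.sum_congr rfl fun i _ => ?_
      rw [Matrix.mulVec_mulVec, ← pow_succ']
    rw [hmul, Fin.sum_univ_castSucc, Fin.sum_univ_succ]
    simp only [Fin.cases_zero, Fin.cases_succ, Fin.coe_castSucc, Fin.val_succ,
      Fin.val_zero, pow_zero, Matrix.one_mulVec, Fin.val_last, ← hw'eq]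
    simp only [smul_add, smul_smul]
    rw [inv_mul_cancel₀ (ne_of_gt h1α), one_smul]
    abel
end

section
/- Let A be an n×n real matrix, B an n×m real matrix, U ⊆ ℝᵐ, W ⊆ ℝⁿ, X ⊆ ℝⁿ, N ≥ 1, and define the tightened constraint sets X(0) = X and X(k) = {x ∈ X(k−1) | ∀ w ∈ W, x + A^{k−1} w ∈ X(k−1)} for k ≥ 1. Let X_T ⊆ X(N) be a terminal set admitting a robust local controller κ_L : ℝⁿ → ℝᵐ such that for every x ∈ X_T and w ∈ W, the point y = x + A^{N−1} w satisfies κ_L(y) ∈ U and A y + B κ_L(y) ∈ X_T. Let X_F be the set of states x₀ admitting a feasible control sequence (u_k ∈ U with nominal states x_0 = x₀, x_{k+1} = A x_k + B u_k satisfying x_k ∈ X(k) for 0 ≤ k ≤ N and x_N ∈ X_T), and let κ : ℝⁿ → ℝᵐ be any controller that, for each x ∈ X_F, returns the first input of some feasible control sequence for x. Define X'_F = {x ∈ X_F | ∀ w ∈ W, A x + w ∈ X_F}. Then every trajectory x : ℕ → ℝⁿ with x(t+1) = A x(t) + B u(t) + w(t), w(t) ∈ W, x(0) ∈ X_F, in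 which at each step either u(t) = κ(x(t)), or u(t) = 0 and x(t) ∈ X'_F, satisfies x(t) ∈ X_F ⊆ X for all t ∈ ℕ. -/
/-!
If the RMPC problem is feasible at `x₀` with inputs `u`, then after one step of the true
system under `u 0` and a disturbance `w ∈ W`, it is feasible again: shift the input
sequence by one and append the terminal controller `κL`. The shifted nominal states are
the old ones offset by `Aᵏ w`, which the tightening of `X(k)` keeps admissible, and the
terminal controller keeps the final nominal state in `X_T`. Thus `X_F` is robustly
invariant under `κ`; skipping is only allowed from `X'_F`, whose disturbed zero-input
successors lie in `X_F` by definition, and `X_F ⊆ X(0) = X`.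
-/

open Matrix

theorem Matrix.mulVec_add_pow_mulVec {ι R : Type*} [Fintype ι] [DecidableEq ι] [Semiring R]
    (A : Matrix ι ι R) (y v w : ι → R) (k : ℕ) :
    A *ᵥ (y + (A ^ k) *ᵥ w) + v = A *ᵥ y + v + (A ^ (k + 1)) *ᵥ w := by
  rw [mulVec_add, mulVec_mulVec, ← pow_succ']
  abel

theorem intermittent_trajectory_mem {ι ι' R : Type*} [Fintype ι] [Fintype ι'] [Semiring R]
    {A : Matrix ι ι R} {B : Matrix ι ι' R} {W S S' : Set (ι → R)} {κ : (ι → R) → ι' → R}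
    (hκ : ∀ y ∈ S, ∀ v ∈ W, A *ᵥ y + B *ᵥ κ y + v ∈ S)
    (hS' : ∀ y ∈ S', ∀ v ∈ W, A *ᵥ y + v ∈ S)
    {x : ℕ → ι → R} {u : ℕ → ι' → R} {w : ℕ → ι → R}
    (hdyn : ∀ t, x (t + 1) = A *ᵥ x t + B *ᵥ u t + w t) (hw : ∀ t, w t ∈ W)
    (hu : ∀ t, u t = κ (x t) ∨ (u t = 0 ∧ x t ∈ S')) (h0 : x 0 ∈ S) :
    ∀ t, x t ∈ S := by
  intro t
  induction t with
  | zero => exact h0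
  | succ t ih =>
    rw [hdyn t]
    rcases hu t with hκt | ⟨hzero, hskip⟩
    · rw [hκt]
      exact hκ _ ih _ (hw t)
    · rw [hzero, mulVec_zero, add_zero]
      exact hS' _ hskip _ (hw t)

namespace RMPCFeasible

variable {n m : ℕ} {A : Matrix (Fin n) (Fin n) ℝ} {B : Matrix (Fin n) (Fin m) ℝ}
  {U : Set (Fin m → ℝ)} {W : Set (Fin n → ℝ)} {Xk : ℕ → Set (Fin n → ℝ)}
  {XT : Set (Fin n → ℝ)}

theorem mem_zero {N : ℕ} {x₀ : Fin n → ℝ} {u : ℕ → Fin m → ℝ}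
    (h : RMPCFeasible A B U Xk XT N x₀ u) : x₀ ∈ Xk 0 := by
  obtain ⟨-, xs, rfl, -, hxs, -⟩ := h
  exact hxs 0 N.zero_le

theorem exists_succ {M : ℕ}
    (htighten : ∀ k, ∀ y ∈ Xk (k + 1), ∀ v ∈ W, y + (A ^ k) *ᵥ v ∈ Xk k)
    (hXT : XT ⊆ Xk (M + 1)) {κL : (Fin n → ℝ) → Fin m → ℝ}
    (hκL : ∀ y ∈ XT, ∀ v ∈ W, κL (y + (A ^ M) *ᵥ v) ∈ U ∧
      A *ᵥ (y + (A ^ M) *ᵥ v) + B *ᵥ κL (y + (A ^ M) *ᵥ v) ∈ XT)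
    {x₀ : Fin n → ℝ} {u : ℕ → Fin m → ℝ} (h : RMPCFeasible A B U Xk XT (M + 1) x₀ u)
    {w : Fin n → ℝ} (hw : w ∈ W) :
    ∃ u', RMPCFeasible A B U Xk XT (M + 1) (A *ᵥ x₀ + B *ᵥ u 0 + w) u' := by
  obtain ⟨huU, xs, rfl, hxs, hXs, hT⟩ := h
  obtain ⟨hκU, hκT⟩ := hκL _ hT w hw
  set z := xs (M + 1) + (A ^ M) *ᵥ w
  refine ⟨fun k => if k < M then u (k + 1) else κL z, ?_,
    fun k => if k ≤ M then xs (k + 1) + (A ^ k) *ᵥ w else A *ᵥ z + B *ᵥ κL z,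
    ?_, ?_, ?_, ?_⟩
  · intro k hk
    dsimp only
    split_ifs
    · exact huU (k + 1) (by omega)
    · exact hκU
  · simp only [M.zero_le, if_true, pow_zero, one_mulVec, hxs 0 M.succ_pos]
  · intro k hk
    rcases Nat.lt_or_ge k M with hkM | hkM
    · simp only [hkM, hkM.le, Nat.succ_le_of_lt hkM, if_true]
      rw [hxs (k + 1) (by omega), mulVec_add_pow_mulVec]
    · obtain rfl : k = M := by omega
      simp [z]
  · intro k hk
    dsimp only
    split_ifs with hkM
    · exact htighten k _ (hXs (k + 1) (by omega)) w hw
    · obtain rfl : k = M + 1 := by omega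
      exact hXT hκT
  · simpa using hκT

end RMPCFeasible

/-- Combination of Theorem 1 and Proposition 1: with RMPC as the underlying
safe controller, the opportunistic intermittent-control framework (apply the
RMPC input, or skip with zero input when the state is in the strengthened safe
set `X'_F = B(X_F,0) ∩ X_F`) keeps every trajectory starting in the feasible
set `X_F` inside `X_F ⊆ X` forever. -/
theorem intermittent_rmpc_safety
    {n m : ℕ}
    (A : Matrix (Fin n) (Fin n) ℝ) (B : Matrix (Fin n) (Fin m) ℝ)
    (U : Set (Fin m → ℝ)) (W : Set (Fin n → ℝ)) (X : Set (Fin n → ℝ))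
    (N : ℕ) (hN : 1 ≤ N)
    (Xk : ℕ → Set (Fin n → ℝ))
    (hXk0 : Xk 0 = X)
    (hXk : ∀ k, Xk (k + 1) = {x ∈ Xk k | ∀ w ∈ W, x + (A ^ k).mulVec w ∈ Xk k})
    (XT : Set (Fin n → ℝ)) (hXT : XT ⊆ Xk N)
    (κL : (Fin n → ℝ) → (Fin m → ℝ))
    (hκL : ∀ x ∈ XT, ∀ w ∈ W,
      κL (x + (A ^ (N - 1)).mulVec w) ∈ U ∧
      A.mulVec (x + (A ^ (N - 1)).mulVec w) +
        B.mulVec (κL (x + (A ^ (N - 1)).mulVec w)) ∈ XT)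
    (XF : Set (Fin n → ℝ))
    (hXF : XF = {x₀ | ∃ u, RMPCFeasible A B U Xk XT N x₀ u})
    (κ : (Fin n → ℝ) → (Fin m → ℝ))
    (hκ : ∀ x ∈ XF, ∃ u, RMPCFeasible A B U Xk XT N x u ∧ κ x = u 0)
    (XF' : Set (Fin n → ℝ))
    (hXF' : XF' = {x ∈ XF | ∀ w ∈ W, A.mulVec x + w ∈ XF})
    (x : ℕ → (Fin n → ℝ)) (u : ℕ → (Fin m → ℝ)) (w : ℕ → (Fin n → ℝ))
    (hdyn : ∀ t, x (t + 1) = A.mulVec (x t) + B.mulVec (u t) + w t)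
    (hw : ∀ t, w t ∈ W)
    (hu : ∀ t, u t = κ (x t) ∨ (u t = 0 ∧ x t ∈ XF'))
    (h0 : x 0 ∈ XF) :
    ∀ t, x t ∈ XF ∧ x t ∈ X := by
  obtain ⟨M, rfl⟩ : ∃ M, N = M + 1 := ⟨N - 1, by omega⟩
  have htighten : ∀ k, ∀ y ∈ Xk (k + 1), ∀ v ∈ W, y + (A ^ k) *ᵥ v ∈ Xk k :=
    fun k y hy => (hXk k ▸ hy).2
  have hinvariant : ∀ y ∈ XF, ∀ v ∈ W, A *ᵥ y + B *ᵥ κ y + v ∈ XF := by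
    intro y hy v hv
    obtain ⟨uy, hfeas, hκy⟩ := hκ y hy
    rw [hXF, hκy]
    exact hfeas.exists_succ htighten hXT hκL hv
  have hskip : ∀ y ∈ XF', ∀ v ∈ W, A *ᵥ y + v ∈ XF := fun y hy => (hXF' ▸ hy).2
  have hsafe := intermittent_trajectory_mem hinvariant hskip hdyn hw hu h0
  refine fun t => ⟨hsafe t, ?_⟩
  obtain ⟨ut, hfeas⟩ := hXF ▸ hsafe t
  exact hXk0 ▸ hfeas.mem_zero
end
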